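/- Let μ1 be the Deferred Acceptance match and μ2 the match produced from μ1 by the restricted Top Trading Cycles stage. If a coalition A within-group blocks μ2 by within-group enforcing a match ν that A prefers to μ2, then for every student i ∈ A who strictly prefers ν(i) to μ2(i), the school s = ν(i) is filled to capacity at μ2, i.e., |μ2⁻¹(s)| = q_s. -/
import Mathlib


/-- A school choice problem.  Students `I` and schools `S` are finite types.
A match sends each student to `some s` (a school) or `none` (unmatched, i.e.
matched to herself).  Strict preferences/priorities are encoded by injective
numerical rank functions (higher value = more preferred / higher priority);
the weak between-group priority is encoded by an arbitrary rank function,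
whose level sets are the priority groups. -/
structure SchoolChoice (I S : Type*) [Fintype I] [Fintype S] where
  /-- the capacity of each school -/
  q : S → ℕ
  /-- each school has at least one seat -/
  q_pos : ∀ s, 1 ≤ q s
  /-- student `i`'s strict preference over `S ∪ {i}` (`none` = being unmatched) -/
  pref : I → Option S → ℕ
  pref_inj : ∀ i, Function.Injective (pref i)
  /-- the between-group priority of school `s` (a weak order on students) -/
  btw : S → I → ℕ
  /-- the within-group priority of school `s` (a strict total order on students) -/
  wthn : S → I → ℕ
  wthn_inj : ∀ s, Function.Injective (wthn s)
  /-- the within-group priority refines the between-group priority -/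
  refines : ∀ s i j, btw s i < btw s j → wthn s i < wthn s j

namespace SchoolChoice

variable {I S : Type*} [Fintype I] [Fintype S] (P : SchoolChoice I S)

/-- `μ` is a match: no school is assigned more students than its capacity. -/
def IsMatch (μ : I → Option S) : Prop :=
  ∀ s : S, {i | μ i = some s}.ncard ≤ P.q s

/-- `μ` is individually rational: every student weakly prefers her assignment
to being unmatched. -/
def IndRational (μ : I → Option S) : Prop :=
  ∀ i, P.pref i none ≤ P.pref i (μ i)

/-- Coalition `A` prefers `ν` to `μ`: all members weakly, some member strictly. -/
def Prefers (A : Set I) (ν μ : I → Option S) : Prop :=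
  (∀ i ∈ A, P.pref i (μ i) ≤ P.pref i (ν i)) ∧ ∃ i ∈ A, P.pref i (μ i) < P.pref i (ν i)

/-- The priority group `[i]_s` of student `i` at school `s`. -/
def Group (s : S) (i : I) : Set I := {j | P.btw s j = P.btw s i}

/-- `A` can between-group enforce `ν` over `μ`: every member assigned a school
by `ν` either displaces a student of strictly lower between-group priority or
takes an empty seat (a student can always enforce becoming unmatched). -/
def BtwEnforce (A : Set I) (ν μ : I → Option S) : Prop :=
  ∀ i ∈ A, ∀ s, ν i = some s →
    (∃ j, μ j = some s ∧ P.btw s j < P.btw s i) ∨ {j | μ j = some s}.ncard < P.q s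

/-- `A` between-group blocks `μ`. -/
def BtwBlocks (A : Set I) (μ : I → Option S) : Prop :=
  ∃ ν, P.IsMatch ν ∧ P.BtwEnforce A ν μ ∧ P.Prefers A ν μ

/-- The responsive set extension `A ≿_s B` of the between-group priority:
`B` is no larger than `A`, and the students of `B` can be paired injectively
with students of `A` of weakly higher between-group priority. -/
def SetGE (s : S) (A B : Set I) : Prop :=
  B.ncard ≤ A.ncard ∧
    ∃ g : I → I, Set.InjOn g B ∧ Set.MapsTo g B A ∧ ∀ b ∈ B, P.btw s b ≤ P.btw s (g b)

/-- Set indifference `A ∼_s B` under the responsive extension. -/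
def SetSim (s : S) (A B : Set I) : Prop := P.SetGE s A B ∧ P.SetGE s B A

/-- The within-group upper contour set `U_s(i)`: the students in `i`'s priority
group at `s` with weakly higher within-group priority. -/
def UCS (s : S) (i : I) : Set I :=
  {j | P.btw s j = P.btw s i ∧ P.wthn s i ≤ P.wthn s j}

/-- The pairs `(i, j)` where `i ∈ A` is sent to `s` by `ν` and `j` is a
within-group interrupter of `i` (i.e. `j ∈ U_s(i) \ A`).  Its cardinality is
the total number of within-group interrupters across all members of `A`
matched to `s` by `ν`. -/
def InterruptPairs (A : Set I) (ν : I → Option S) (s : S) : Set (I × I) :=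
  {p | p.1 ∈ A ∧ ν p.1 = some s ∧ p.2 ∈ P.UCS s p.1 ∧ p.2 ∉ A}

/-- `A` can within-group enforce `ν` over `μ`: for every school in `ν(A)`,
(1) `ν⁻¹(s) ∼_s μ⁻¹(s)` and (2) the total number of within-group interrupters
is at most `q s - |ν⁻¹(s)|`. -/
def WthnEnforce (A : Set I) (ν μ : I → Option S) : Prop :=
  ∀ s : S, (∃ i ∈ A, ν i = some s) →
    P.SetSim s {j | ν j = some s} {j | μ j = some s} ∧
    (P.InterruptPairs A ν s).ncard ≤ P.q s - {j | ν j = some s}.ncard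

/-- `A` within-group blocks `μ`. -/
def WthnBlocks (A : Set I) (μ : I → Option S) : Prop :=
  ∃ ν, P.IsMatch ν ∧ P.WthnEnforce A ν μ ∧ P.Prefers A ν μ

/-- The unified core: no coalition between-group blocks nor within-group
blocks the match. -/
def UnifiedCore (μ : I → Option S) : Prop :=
  (∀ A : Set I, ¬ P.BtwBlocks A μ) ∧ ∀ A : Set I, ¬ P.WthnBlocks A μ

/-- A match is fair (w.r.t. the within-group priorities, à la Gale–Shapley):
no student prefers a school that has an empty seat or admits a student of
strictly lower within-group priority. -/
def Fair (μ : I → Option S) : Prop :=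
  ¬ ∃ (i : I) (s : S), P.pref i (μ i) < P.pref i (some s) ∧
    ((∃ j, μ j = some s ∧ P.wthn s j < P.wthn s i) ∨ {j | μ j = some s}.ncard < P.q s)

/-! ### The student-proposing Deferred Acceptance algorithm,
specified relationally.  The state is the map `R` sending each student to the
set of schools that have rejected her so far. -/

/-- Given rejections `R`, student `i` currently proposes to `o`: `o` is not a
school that rejected `i`, and `o` is her most-preferred such option in
`S ∪ {i}`. -/
def ProposesTo (R : I → Set S) (i : I) (o : Option S) : Prop :=
  (∀ s, o = some s → s ∉ R i) ∧
  ∀ o' : Option S, (∀ s, o' = some s → s ∉ R i) → P.pref i o' ≤ P.pref i o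

/-- Given rejections `R`, school `s` now rejects `i`: `i` proposes to `s` and
at least `q s` current proposers have strictly higher within-group priority. -/
def Rejects (R : I → Set S) (s : S) (i : I) : Prop :=
  P.ProposesTo R i (some s) ∧
  P.q s ≤ {j | P.ProposesTo R j (some s) ∧ P.wthn s i < P.wthn s j}.ncard

/-- One round of Deferred Acceptance: some school is over-demanded, and every
over-demanded school rejects all but its `≻*`-top `q s` proposers. -/
def DAStep (R R' : I → Set S) : Prop :=
  (∃ s, P.q s < {i | P.ProposesTo R i (some s)}.ncard) ∧
  ∀ i, R' i = R i ∪ {s | P.Rejects R s i}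

/-- Deferred Acceptance terminates: no school is over-demanded. -/
def DATerminal (R : I → Set S) : Prop :=
  ∀ s, {i | P.ProposesTo R i (some s)}.ncard ≤ P.q s

/-- `μ1` is the outcome of the student-proposing Deferred Acceptance
algorithm: starting from no rejections, rounds are iterated until no school is
over-demanded, and every student is matched to the agent she last proposed to. -/
def IsDAOutcome (μ1 : I → Option S) : Prop :=
  ∃ (n : ℕ) (R : ℕ → I → Set S),
    (∀ i, R 0 i = ∅) ∧ (∀ k < n, P.DAStep (R k) (R (k + 1))) ∧
    P.DATerminal (R n) ∧ ∀ i, P.ProposesTo (R n) i (μ1 i)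

/-! ### The restricted Top Trading Cycles stage, starting from a match `μ1`,
specified relationally.  The state is the pair of the set of active students
and the current assignment. -/

/-- Student `i` is initially active in the TTC stage: she is matched by `μ1`
to a school at which she lies in the lowest priority group among the students
matched there. -/
def InitActive (μ1 : I → Option S) (i : I) : Prop :=
  ∃ s, μ1 i = some s ∧ ∀ j, μ1 j = some s → P.btw s i ≤ P.btw s j

/-- School `s` is admissible to student `i` (given active students `Act`):
some active student assigned to `s` by `μ1` is in the same priority group as
`i` at `s`.  (In particular `s` is then an active school.) -/
def Admissible (μ1 : I → Option S) (Act : Set I) (i : I) (s : S) : Prop :=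
  ∃ j ∈ Act, μ1 j = some s ∧ P.btw s i = P.btw s j

/-- Active student `i` points to school `s`: `s` is her most-preferred
admissible active school. -/
def StuPoints (μ1 : I → Option S) (Act : Set I) (i : I) (s : S) : Prop :=
  i ∈ Act ∧ P.Admissible μ1 Act i s ∧
  ∀ s', P.Admissible μ1 Act i s' → P.pref i (some s') ≤ P.pref i (some s)

/-- Active school `s` points to student `i`: `i` is the `≻*_s`-highest active
student in `μ1⁻¹(s)`. -/
def SchPoints (μ1 : I → Option S) (Act : Set I) (s : S) (i : I) : Prop :=
  i ∈ Act ∧ μ1 i = some s ∧ ∀ j ∈ Act, μ1 j = some s → P.wthn s j ≤ P.wthn s i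

/-- A (pointing) cycle `i₁, s₁, …, iₙ, sₙ` of distinct active students and
active schools: each student `c k` points to school `d k`, and each school
`d k` points to the cyclically next student `c (k+1)`. -/
def IsCycle (μ1 : I → Option S) (Act : Set I) {n : ℕ}
    (c : Fin (n + 1) → I) (d : Fin (n + 1) → S) : Prop :=
  Function.Injective c ∧ Function.Injective d ∧
  (∀ k, P.StuPoints μ1 Act (c k) (d k)) ∧
  ∀ k, P.SchPoints μ1 Act (d k) (c (k + 1))

/-- One round of the restricted TTC stage: a cycle forms, each student on the
cycle is assigned the school she points to and is deactivated; all other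
assignments are unchanged. -/
def TTCStep (μ1 : I → Option S) (st st' : Set I × (I → Option S)) : Prop :=
  ∃ (n : ℕ) (c : Fin (n + 1) → I) (d : Fin (n + 1) → S),
    P.IsCycle μ1 st.1 c d ∧
    st'.1 = st.1 \ Set.range c ∧
    (∀ k, st'.2 (c k) = some (d k)) ∧
    ∀ i, i ∉ Set.range c → st'.2 i = st.2 i

/-- `μ2` is the outcome of the restricted Top Trading Cycles stage starting
from `μ1`: beginning with the initially active students and assignment `μ1`,
rounds are iterated until no student is active. -/
def IsTTCOutcome (μ1 μ2 : I → Option S) : Prop :=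
  ∃ (m : ℕ) (st : ℕ → Set I × (I → Option S)),
    st 0 = ({i | P.InitActive μ1 i}, μ1) ∧
    (∀ k < m, P.TTCStep μ1 (st k) (st (k + 1))) ∧
    (st m).1 = ∅ ∧ μ2 = (st m).2

end SchoolChoice


open Finset in
private lemma top_rank_card' {α : Type*} (T : Finset α) (w : α → ℕ) (hw : Set.InjOn w T)
    (t : ℕ) (ht : t ≤ T.card) :
    t ≤ (T.filter (fun j => (T.filter (fun j' => w j < w j')).card < t)).card := by
  classical
  set cnt : α → ℕ := fun j => (T.filter (fun j' => w j < w j')).card with hcnt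
  have hmono : ∀ j ∈ T, ∀ k ∈ T, w j < w k → cnt k < cnt j := by
    intro j hj k hk hlt
    apply Finset.card_lt_card
    constructor
    · intro x hx
      simp only [mem_filter] at hx ⊢
      exact ⟨hx.1, hlt.trans hx.2⟩
    · intro hsub
      have : k ∈ T.filter (fun j' => w k < w j') := hsub (by simp [hk, hlt])
      simp at this
  have hinj : Set.InjOn cnt T := by
    intro j hj k hk he
    by_contra hne
    have hwne : w j ≠ w k := fun h => hne (hw hj hk h)
    rcases lt_or_gt_of_ne hwne with h | h
    · exact absurd he.symm (Nat.ne_of_lt (hmono j hj k hk h))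
    · exact absurd he (Nat.ne_of_lt (hmono k hk j hj h))
  have hlt : ∀ j ∈ T, cnt j < T.card := by
    intro j hj
    calc cnt j ≤ (T.erase j).card := by
          apply Finset.card_le_card
          intro x hx
          simp only [mem_filter] at hx
          exact Finset.mem_erase.2 ⟨fun h => by simp [h] at hx, hx.1⟩
      _ < T.card := Finset.card_erase_lt_of_mem hj
  have himg : T.image cnt = Finset.range T.card := by
    apply Finset.eq_of_subset_of_card_le
    · intro x hx
      rcases Finset.mem_image.1 hx with ⟨j, hj, rfl⟩
      exact Finset.mem_range.2 (hlt j hj)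
    · rw [Finset.card_image_of_injOn hinj, Finset.card_range]
  have h4 : (T.filter fun j => cnt j < t).image cnt = Finset.range t := by
    ext x
    simp only [Finset.mem_image, Finset.mem_filter, Finset.mem_range]
    constructor
    · rintro ⟨j, ⟨hj, hjt⟩, rfl⟩; exact hjt
    · intro hx
      have : x ∈ T.image cnt := by
        rw [himg]; exact Finset.mem_range.2 (lt_of_lt_of_le hx ht)
      rcases Finset.mem_image.1 this with ⟨j, hj, rfl⟩
      exact ⟨j, ⟨hj, hx⟩, rfl⟩
  have hsub : ∀ x ∈ (T.filter fun j => cnt j < t), x ∈ (T : Set α) :=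
    fun x hx => (Finset.mem_filter.1 hx).1
  have := Finset.card_image_of_injOn (f := cnt) (s := T.filter fun j => cnt j < t)
    (hinj.mono hsub)
  rw [h4, Finset.card_range] at this
  exact this.le

private lemma ncard_setOf_eq {I : Type*} [Fintype I] (p : I → Prop) [DecidablePred p] :
    {j | p j}.ncard = (Finset.univ.filter p).card := by
  rw [← Set.ncard_coe_finset]
  congr 1
  ext x; simp

namespace SchoolChoice

variable {I S : Type*} [Fintype I] [Fintype S] (P : SchoolChoice I S)

private lemma propose_unique {R : I → Set S} {i : I} {o o' : Option S}
    (h : P.ProposesTo R i o) (h' : P.ProposesTo R i o') : o = o' :=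
  P.pref_inj i (le_antisymm (h'.2 o h.1) (h.2 o' h'.1))

private lemma da_persist {R R' : I → Set S}
    (hstep : ∀ i, R' i = R i ∪ {s | P.Rejects R s i}) (s : S)
    (h : P.q s ≤ {j | P.ProposesTo R j (some s)}.ncard) :
    P.q s ≤ {j | P.ProposesTo R' j (some s)}.ncard := by
  classical
  set Tf := Finset.univ.filter (fun j => P.ProposesTo R j (some s)) with hTf
  have hT : {j | P.ProposesTo R j (some s)}.ncard = Tf.card := ncard_setOf_eq _
  have hw : Set.InjOn (P.wthn s) Tf := (P.wthn_inj s).injOn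
  have htop := top_rank_card' Tf (P.wthn s) hw (P.q s) (hT ▸ h)
  refine le_trans htop ?_
  rw [ncard_setOf_eq]
  apply Finset.card_le_card
  intro j hj
  obtain ⟨hjTf, hcnt⟩ := Finset.mem_filter.1 hj
  have hprop : P.ProposesTo R j (some s) := (Finset.mem_filter.1 hjTf).2
  have hnrej : ¬ P.Rejects R s j := by
    intro hrej
    have heq : {j' | P.ProposesTo R j' (some s) ∧ P.wthn s j < P.wthn s j'}.ncard
        = (Tf.filter fun j' => P.wthn s j < P.wthn s j').card := by
      rw [ncard_setOf_eq]
      congr 1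
      ext x
      simp [hTf, and_assoc]
    have h2' := hrej.2
    rw [heq] at h2'
    exact absurd h2' (not_le.2 hcnt)
  refine Finset.mem_filter.2 ⟨Finset.mem_univ _, ?_, ?_⟩
  · intro s0 hs0
    injection hs0 with hs0
    subst hs0
    rw [hstep]
    rintro (hmem | hmem)
    · exact hprop.1 s rfl hmem
    · exact hnrej hmem
  · intro o' ho'
    refine hprop.2 o' ?_
    intro s0 hs0 hmem
    exact ho' s0 hs0 (by rw [hstep]; exact Set.mem_union_left _ hmem)

private lemma da_full {μ1 : I → Option S} (h1 : P.IsDAOutcome μ1) {i : I} {s : S}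
    (hi : P.pref i (μ1 i) < P.pref i (some s)) :
    {j | μ1 j = some s}.ncard = P.q s := by
  classical
  obtain ⟨n, R, h0, hstep, hterm, hfin⟩ := h1
  have hset : {j | μ1 j = some s} = {j | P.ProposesTo (R n) j (some s)} := by
    ext j
    constructor
    · intro hj
      have := hfin j
      rwa [show μ1 j = some s from hj] at this
    · intro hj
      exact (P.propose_unique (hfin j) hj)
  have hrej : s ∈ R n i := by
    by_contra hns
    have := (hfin i).2 (some s) (by rintro s0 ⟨rfl⟩; exact hns)
    omega
  have hex : ∃ m, s ∈ R m i := ⟨n, hrej⟩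
  set k := Nat.find hex with hkdef
  have hk : s ∈ R k i := Nat.find_spec hex
  have hkpos : k ≠ 0 := by
    intro h
    rw [h, h0] at hk
    exact hk
  have hkn : k ≤ n := Nat.find_min' hex hrej
  have hk1 : s ∉ R (k - 1) i := Nat.find_min hex (by omega)
  have hstepk := (hstep (k - 1) (by omega)).2
  have hmem : s ∈ R (k - 1) i ∪ {s' | P.Rejects (R (k - 1)) s' i} := by
    rw [← hstepk i, show k - 1 + 1 = k by omega]
    exact hk
  rcases hmem with h | h
  · exact absurd h hk1
  have hq : P.q s ≤ {j | P.ProposesTo (R (k - 1)) j (some s)}.ncard :=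
    le_trans h.2 (Set.ncard_le_ncard (fun j hj => hj.1) (Set.toFinite _))
  have hprop : ∀ m, k - 1 ≤ m → m ≤ n →
      P.q s ≤ {j | P.ProposesTo (R m) j (some s)}.ncard := by
    intro m
    induction m with
    | zero =>
      intro h1m _
      have : k - 1 = 0 := by omega
      rwa [← this]
    | succ m ih =>
      intro h1m h2m
      by_cases hc : k - 1 ≤ m
      · exact P.da_persist (hstep m (by omega)).2 s (ih hc (by omega))
      · have : k - 1 = m + 1 := by omega
        rwa [← this]
  have hge := hprop n (by omega) le_rfl
  have hle := hterm s
  rw [hset]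
  omega

private lemma ttc_inv {μ1 μ2 : I → Option S} (h2 : P.IsTTCOutcome μ1 μ2) :
    (∀ s, {i | μ2 i = some s}.ncard = {i | μ1 i = some s}.ncard) ∧
    ∀ i, P.pref i (μ1 i) ≤ P.pref i (μ2 i) := by
  classical
  obtain ⟨m, st, hst0, hstep, hend, hμ2⟩ := h2
  suffices h : ∀ k ≤ m, (∀ i ∈ (st k).1, (st k).2 i = μ1 i) ∧
      (∀ s, {i | (st k).2 i = some s}.ncard = {i | μ1 i = some s}.ncard) ∧
      (∀ i, P.pref i (μ1 i) ≤ P.pref i ((st k).2 i)) by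
    obtain ⟨_, hA, hB⟩ := h m le_rfl
    rw [hμ2]
    exact ⟨hA, hB⟩
  intro k
  induction k with
  | zero =>
    intro _
    rw [hst0]
    exact ⟨fun i _ => rfl, fun s => rfl, fun i => le_rfl⟩
  | succ k ih =>
    intro hkm
    obtain ⟨hAct, hCard, hPref⟩ := ih (by omega)
    obtain ⟨n, c, d, hcyc, hact', hcd, hout⟩ := hstep k (by omega)
    obtain ⟨hcinj, hdinj, hstu, hsch⟩ := hcyc
    set g : I → I := fun i => if h : ∃ kk, c kk = i then c (h.choose + 1) else i with hg
    have hgc : ∀ kk, g (c kk) = c (kk + 1) := by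
      intro kk
      have hex : ∃ k', c k' = c kk := ⟨kk, rfl⟩
      have hch : hex.choose = kk := hcinj hex.choose_spec
      simp only [hg, dif_pos hex, hch]
    have hgo : ∀ i, i ∉ Set.range c → g i = i := by
      intro i hi
      simp only [hg, dif_neg (fun h => hi (Set.mem_range.2 h))]
    have hginj : Function.Injective g := by
      intro a b hab
      by_cases ha : a ∈ Set.range c
      · obtain ⟨ka, rfl⟩ := ha
        by_cases hb : b ∈ Set.range c
        · obtain ⟨kb, rfl⟩ := hb
          rw [hgc, hgc] at hab
          rw [add_left_injective 1 (hcinj hab)]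
        · rw [hgc, hgo b hb] at hab
          exact absurd (hab ▸ Set.mem_range_self _) hb
      · by_cases hb : b ∈ Set.range c
        · obtain ⟨kb, rfl⟩ := hb
          rw [hgo a ha, hgc] at hab
          exact absurd (hab ▸ Set.mem_range_self _) ha
        · rwa [hgo a ha, hgo b hb] at hab
    have hfun : ∀ i, (st (k + 1)).2 i = (st k).2 (g i) := by
      intro i
      by_cases hi : i ∈ Set.range c
      · obtain ⟨kk, rfl⟩ := hi
        rw [hcd kk, hgc]
        have h1 := hsch kk
        rw [hAct _ h1.1, h1.2.1]
      · rw [hout i hi, hgo i hi]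
    refine ⟨?_, ?_, ?_⟩
    · intro i hi
      rw [hact'] at hi
      rw [hout i hi.2, hAct i hi.1]
    · intro s
      have hpre : {i | (st (k + 1)).2 i = some s} = g ⁻¹' {i | (st k).2 i = some s} := by
        ext i
        simp only [Set.mem_setOf_eq, Set.mem_preimage, hfun i]
      have hbij : Function.Bijective g := Finite.injective_iff_bijective.1 hginj
      rw [hpre, Set.ncard_preimage_of_injective_subset_range hginj
        (by rw [Set.range_eq_univ.2 hbij.2]; exact Set.subset_univ _)]
      exact hCard s
    · intro i
      by_cases hi : i ∈ Set.range c
      · obtain ⟨kk, rfl⟩ := hi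
        rw [hcd kk]
        have h1 := hsch (kk - 1)
        rw [sub_add_cancel] at h1
        rw [h1.2.1]
        exact (hstu kk).2.2 _ ⟨c kk, (hstu kk).1, h1.2.1, rfl⟩
      · rw [hout i hi]
        exact hPref i

end SchoolChoice

open SchoolChoice in
/-- if a coalition within-group blocks `μ2` with `ν`, then every
member who strictly prefers her `ν`-assignment is sent by `ν` to a school
filled to capacity at `μ2`. -/
theorem within_block_school_full {I S : Type*} [Fintype I] [Fintype S]
    (P : SchoolChoice I S) (μ1 μ2 : I → Option S)
    (h1 : P.IsDAOutcome μ1) (h2 : P.IsTTCOutcome μ1 μ2)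
    (A : Set I) (ν : I → Option S) (hν : P.IsMatch ν)
    (henf : P.WthnEnforce A ν μ2) (hpref : P.Prefers A ν μ2) :
    ∀ i ∈ A, P.pref i (μ2 i) < P.pref i (ν i) →
      ∀ s : S, ν i = some s → {j | μ2 j = some s}.ncard = P.q s := by
  intro i hiA hlt s hs
  obtain ⟨hcard, hpref1⟩ := P.ttc_inv h2
  rw [hs] at hlt
  have : P.pref i (μ1 i) < P.pref i (some s) := lt_of_le_of_lt (hpref1 i) hlt
  rw [hcard s]
  exact P.da_full h1 this
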